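/- arXiv:math/0307287 — 3 statements merged into one kernel-verified Lean document; each statement's English description precedes it below -/
import Mathlib

section
/- Let S be a random compact subset of [0,1] and suppose there exist constants 0 < β < 1 and K > 0 such that P(S ∩ [t, t+ε] ≠ ∅) ≤ K ε^β for all 0 < ε < 1 and all t ∈ [0,1]. Then almost surely the Hausdorff dimension of S is at most 1 − β. -/
open MeasureTheory Set Filter
open scoped ENNReal NNReal

/-- Real arithmetic: the expected-cover estimate. -/
private lemma real_calc (β K d : ℝ) (n : ℕ) :
    (2:ℝ)^(n+1) * ((((2:ℝ)^(n+1))⁻¹) ^ d * (K * (((2:ℝ)^(n+1))⁻¹) ^ β))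
      = K * ((2:ℝ) ^ (1 - d - β)) ^ (n+1) := by
  have ha : (0:ℝ) < (2:ℝ)^(n+1) := by positivity
  set a : ℝ := (2:ℝ)^(n+1) with hadef
  have h1 : a⁻¹ ^ d = a ^ (-d) := by
    rw [Real.inv_rpow ha.le, ← Real.rpow_neg ha.le]
  have h2 : a⁻¹ ^ β = a ^ (-β) := by
    rw [Real.inv_rpow ha.le, ← Real.rpow_neg ha.le]
  have h3 : ((2:ℝ) ^ (1 - d - β)) ^ (n+1) = a ^ (1 - d - β) := by
    rw [hadef, ← Real.rpow_natCast ((2:ℝ) ^ (1 - d - β)) (n+1),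
      ← Real.rpow_natCast (2:ℝ) (n+1), ← Real.rpow_mul (by norm_num),
      ← Real.rpow_mul (by norm_num)]
    ring_nf
  rw [h1, h2, h3]
  have h4 : a = a ^ (1:ℝ) := (Real.rpow_one a).symm
  calc a * (a ^ (-d) * (K * a ^ (-β))) = K * (a ^ (1:ℝ) * a ^ (-d) * a ^ (-β)) := by
        rw [← h4]; ring
    _ = K * a ^ (1 - d - β) := by
        rw [← Real.rpow_add ha, ← Real.rpow_add ha]; ring_nf

private lemma key_lemma
    {Ω : Type*} [MeasurableSpace Ω] (P : Measure Ω) [IsProbabilityMeasure P]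
    (S : Ω → Set ℝ)
    (hSsub : ∀ ω, S ω ⊆ Icc (0 : ℝ) 1)
    (β K : ℝ) (hβ0 : 0 < β) (hβ1 : β < 1) (hK : 0 < K)
    (hhit : ∀ t ∈ Icc (0 : ℝ) 1, ∀ ε : ℝ, 0 < ε → ε < 1 →
      P {ω | (S ω ∩ Icc t (t + ε)).Nonempty} ≤ ENNReal.ofReal (K * ε ^ β))
    (d : ℝ) (hd : 1 - β < d) :
    ∀ᵐ ω ∂P, μH[d] (S ω) = 0 := by
  classical
  have hd0 : 0 < d := lt_trans (by linarith) hd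
  -- notation
  set ε : ℕ → ℝ := fun n => ((2:ℝ)^(n+1))⁻¹ with hεdef
  have hεpos : ∀ n, 0 < ε n := fun n => by positivity
  have hεlt1 : ∀ n, ε n < 1 := fun n => by
    rw [hεdef]
    apply inv_lt_one_of_one_lt₀
    exact one_lt_pow₀ (by norm_num : (1:ℝ) < 2) (Nat.succ_ne_zero n)
  -- hitting events
  set A : ℕ → ℕ → Set Ω := fun n i =>
    {ω | (S ω ∩ Icc ((i:ℝ) * ε n) ((i:ℝ) * ε n + ε n)).Nonempty} with hAdef
  have hA : ∀ n : ℕ, ∀ i : ℕ, i < 2^(n+1) →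
      P (A n i) ≤ ENNReal.ofReal (K * (ε n) ^ β) := by
    intro n i hi
    apply hhit _ _ _ (hεpos n) (hεlt1 n)
    constructor
    · positivity
    · have h1 : (i:ℝ) ≤ (2:ℝ)^(n+1) := by
        have : ((i:ℕ):ℝ) ≤ ((2^(n+1) : ℕ) : ℝ) := by exact_mod_cast hi.le
        simpa using this
      have h2 : (i:ℝ) * ε n ≤ (2:ℝ)^(n+1) * ε n :=
        mul_le_mul_of_nonneg_right h1 (hεpos n).le
      have h3 : (2:ℝ)^(n+1) * ε n = 1 := by
        rw [hεdef]; field_simp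
      linarith
  -- the dominating random variables
  set c : ℕ → ℝ≥0∞ := fun n => ENNReal.ofReal ((ε n) ^ d) with hcdef
  set g : ℕ → Ω → ℝ≥0∞ := fun n ω =>
    ∑ i : Fin (2^(n+1)), (toMeasurable P (A n i)).indicator (fun _ => c n) ω with hgdef
  have hgmeas : ∀ n, Measurable (g n) := by
    intro n
    apply Finset.measurable_sum
    intro i _
    exact measurable_const.indicator (measurableSet_toMeasurable P _)
  set q : ℝ := (2:ℝ) ^ (1 - d - β) with hqdef
  have hq0 : 0 < q := Real.rpow_pos_of_pos two_pos _
  have hq1 : q < 1 := Real.rpow_lt_one_of_one_lt_of_neg one_lt_two (by linarith)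
  -- expectation bound
  have hgE : ∀ n, ∫⁻ ω, g n ω ∂P ≤ ENNReal.ofReal (K * q ^ (n+1)) := by
    intro n
    rw [hgdef]
    simp only
    rw [lintegral_finset_sum _ (fun i _ =>
      measurable_const.indicator (measurableSet_toMeasurable P _))]
    have hterm : ∀ i : Fin (2^(n+1)),
        ∫⁻ ω, (toMeasurable P (A n i)).indicator (fun _ => c n) ω ∂P
          ≤ c n * ENNReal.ofReal (K * (ε n) ^ β) := by
      intro i
      rw [lintegral_indicator_const (measurableSet_toMeasurable P _),
        measure_toMeasurable]
      exact mul_le_mul_right (hA n i i.isLt) _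
    calc ∑ i : Fin (2^(n+1)), ∫⁻ ω,
            (toMeasurable P (A n i)).indicator (fun _ => c n) ω ∂P
        ≤ ∑ _i : Fin (2^(n+1)), c n * ENNReal.ofReal (K * (ε n) ^ β) :=
          Finset.sum_le_sum fun i _ => hterm i
      _ = (2^(n+1) : ℕ) * (c n * ENNReal.ofReal (K * (ε n) ^ β)) := by
          rw [Finset.sum_const, Finset.card_univ, Fintype.card_fin, nsmul_eq_mul]
      _ = ENNReal.ofReal ((2:ℝ)^(n+1) * ((ε n) ^ d * (K * (ε n) ^ β))) := by
          rw [hcdef]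
          simp only
          rw [← ENNReal.ofReal_mul (by positivity)]
          have hcast : ((2^(n+1):ℕ) : ℝ≥0∞) = ENNReal.ofReal ((2:ℝ)^(n+1)) := by
            rw [ENNReal.ofReal_pow (by norm_num)]
            norm_num
          rw [hcast, ← ENNReal.ofReal_mul (by positivity)]
      _ = ENNReal.ofReal (K * q ^ (n+1)) := by
          rw [hεdef, hqdef]
          exact congrArg _ (real_calc β K d n)
  -- summability
  have hsum : ∑' n, ENNReal.ofReal (K * q ^ (n+1)) ≠ ⊤ := by
    have hs : Summable (fun n : ℕ => K * q ^ (n+1)) := by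
      have : Summable (fun n : ℕ => (K * q) * q ^ n) :=
        (summable_geometric_of_lt_one hq0.le hq1).mul_left _
      convert this using 2 with n
      ring
    rw [← ENNReal.ofReal_tsum_of_nonneg (fun n => by positivity) hs]
    exact ENNReal.ofReal_ne_top
  -- a.e. ω, g n ω → 0
  have haegoal : ∀ᵐ ω ∂P, Tendsto (fun n => g n ω) atTop (nhds 0) := by
    have hint : ∫⁻ ω, ∑' n, g n ω ∂P ≠ ⊤ := by
      rw [lintegral_tsum (fun n => (hgmeas n).aemeasurable)]
      exact ne_top_of_le_ne_top hsum (ENNReal.tsum_le_tsum hgE)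
    filter_upwards [ae_lt_top (by
      exact Measurable.ennreal_tsum hgmeas) hint] with ω hω
    exact ENNReal.tendsto_atTop_zero_of_tsum_ne_top hω.ne
  -- conclude
  filter_upwards [haegoal] with ω hω
  refine le_antisymm ?_ zero_le
  -- covering sets
  set t : ∀ n : ℕ, Fin (2^(n+1)) → Set ℝ := fun n i =>
    if (S ω ∩ Icc ((i:ℝ) * ε n) ((i:ℝ) * ε n + ε n)).Nonempty then
      Icc ((i:ℝ) * ε n) ((i:ℝ) * ε n + ε n) else ∅ with htdef
  have hdiam : ∀ n (i : Fin (2^(n+1))), EMetric.diam (t n i) ≤ ENNReal.ofReal (ε n) := by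
    intro n i
    simp only [htdef]
    split
    · rw [EMetric.diam, Real.ediam_Icc]
      simp
    · simp [EMetric.diam]
  have hcover : ∀ n, S ω ⊆ ⋃ i : Fin (2^(n+1)), t n i := by
    intro n x hx
    obtain ⟨hx0, hx1⟩ := hSsub ω hx
    set i0 : ℕ := min ⌊x * (2:ℝ)^(n+1)⌋₊ (2^(n+1) - 1) with hi0def
    have hi0lt : i0 < 2^(n+1) := lt_of_le_of_lt (min_le_right _ _)
      (Nat.sub_lt (by positivity) one_pos)
    have hcast : ((2^(n+1) - 1 : ℕ) : ℝ) = (2:ℝ)^(n+1) - 1 := by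
      have : (1:ℕ) ≤ 2^(n+1) := Nat.one_le_two_pow
      push_cast [this]
      ring
    have hlow : (i0 : ℝ) ≤ x * (2:ℝ)^(n+1) := by
      calc (i0:ℝ) ≤ (⌊x * (2:ℝ)^(n+1)⌋₊ : ℝ) := Nat.cast_le.mpr (min_le_left _ _)
        _ ≤ x * (2:ℝ)^(n+1) := Nat.floor_le (by positivity)
    have hhigh : x * (2:ℝ)^(n+1) ≤ (i0:ℝ) + 1 := by
      rcases le_or_gt ⌊x * (2:ℝ)^(n+1)⌋₊ (2^(n+1) - 1) with h | h
      · have : i0 = ⌊x * (2:ℝ)^(n+1)⌋₊ := min_eq_left h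
        rw [this]
        exact (Nat.lt_floor_add_one _).le
      · have : i0 = 2^(n+1) - 1 := min_eq_right h.le
        rw [this, hcast]
        have : x * (2:ℝ)^(n+1) ≤ (2:ℝ)^(n+1) := by
          nlinarith [pow_pos (two_pos (α := ℝ)) (n+1)]
        linarith
    have hεval : ε n * (2:ℝ)^(n+1) = 1 := by rw [hεdef]; field_simp
    have hxmem : x ∈ Icc ((i0:ℝ) * ε n) ((i0:ℝ) * ε n + ε n) := by
      constructor
      · have := mul_le_mul_of_nonneg_right hlow (hεpos n).le
        calc (i0:ℝ) * ε n ≤ x * (2:ℝ)^(n+1) * ε n := this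
          _ = x := by rw [mul_assoc, mul_comm ((2:ℝ)^(n+1)) (ε n), hεval, mul_one]
      · have := mul_le_mul_of_nonneg_right hhigh (hεpos n).le
        calc x = x * (2:ℝ)^(n+1) * ε n := by
              rw [mul_assoc, mul_comm ((2:ℝ)^(n+1)) (ε n), hεval, mul_one]
          _ ≤ ((i0:ℝ) + 1) * ε n := this
          _ = (i0:ℝ) * ε n + ε n := by ring
    refine mem_iUnion.2 ⟨⟨i0, hi0lt⟩, ?_⟩
    simp only [htdef]
    rw [if_pos ⟨x, hx, hxmem⟩]
    exact hxmem
  have hrtend : Tendsto (fun n => ENNReal.ofReal (ε n)) atTop (nhds 0) := by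
    rw [← ENNReal.ofReal_zero]
    apply ENNReal.tendsto_ofReal
    have : Tendsto (fun n : ℕ => ((2:ℝ)⁻¹) ^ (n+1)) atTop (nhds 0) :=
      (tendsto_pow_atTop_nhds_zero_of_lt_one (r := (2:ℝ)⁻¹) (by norm_num)
        (by norm_num)).comp (tendsto_add_atTop_nat 1)
    convert this using 2 with n
    rw [hεdef, inv_pow]
  have hle : μH[d] (S ω) ≤
      liminf (fun n => ∑ i : Fin (2^(n+1)), EMetric.diam (t n i) ^ d) atTop :=
    Measure.hausdorffMeasure_le_liminf_sum d (S ω) (fun n => ENNReal.ofReal (ε n)) hrtend t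
      (Eventually.of_forall fun n => hdiam n) (Eventually.of_forall hcover)
  refine le_trans hle ?_
  have hsumle : ∀ n, ∑ i : Fin (2^(n+1)), EMetric.diam (t n i) ^ d ≤ g n ω := by
    intro n
    rw [hgdef]
    apply Finset.sum_le_sum
    intro i _
    simp only [htdef]
    split
    · rename_i hne
      rw [EMetric.diam, Real.ediam_Icc, add_sub_cancel_left]
      have hmem : ω ∈ toMeasurable P (A n i) := subset_toMeasurable P _ hne
      rw [indicator_of_mem hmem, hcdef]
      simp only
      rw [ENNReal.ofReal_rpow_of_pos (hεpos n)]
    · rw [EMetric.diam, EMetric.diam_empty, ENNReal.zero_rpow_of_pos hd0]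
      exact zero_le
  calc liminf (fun n => ∑ i : Fin (2^(n+1)), EMetric.diam (t n i) ^ d) atTop
      ≤ liminf (fun n => g n ω) atTop := liminf_le_liminf (Eventually.of_forall hsumle)
    _ = 0 := hω.liminf_eq

/-- A random compact subset `S` of `[0,1]` such that
`P(S ∩ [t, t+ε] ≠ ∅) ≤ K ε^β` for all `0 < ε < 1` and `t ∈ [0,1]`
has Hausdorff dimension at most `1 - β` almost surely. -/
theorem stmt_0
    {Ω : Type*} [MeasurableSpace Ω] (P : Measure Ω) [IsProbabilityMeasure P]
    (S : Ω → Set ℝ)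
    (hScomp : ∀ ω, IsCompact (S ω))
    (hSsub : ∀ ω, S ω ⊆ Icc (0 : ℝ) 1)
    (β K : ℝ) (hβ0 : 0 < β) (hβ1 : β < 1) (hK : 0 < K)
    (hhit : ∀ t ∈ Icc (0 : ℝ) 1, ∀ ε : ℝ, 0 < ε → ε < 1 →
      P {ω | (S ω ∩ Icc t (t + ε)).Nonempty} ≤ ENNReal.ofReal (K * ε ^ β)) :
    ∀ᵐ ω ∂P, dimH (S ω) ≤ ENNReal.ofReal (1 - β) := by
  have hae : ∀ᵐ ω ∂P, ∀ k : ℕ, μH[(1 - β + (1:ℝ)/(k+1) : ℝ)] (S ω) = 0 := by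
    rw [ae_all_iff]
    intro k
    refine key_lemma P S hSsub β K hβ0 hβ1 hK hhit _ ?_
    have : (0:ℝ) < 1/((k:ℝ)+1) := by positivity
    linarith
  filter_upwards [hae] with ω hω
  have hdim : ∀ k : ℕ, dimH (S ω) ≤ ENNReal.ofReal (1 - β + (1:ℝ)/(k+1)) := by
    intro k
    have hpos : (0:ℝ) ≤ 1 - β + (1:ℝ)/(k+1) := by
      have : (0:ℝ) < (1:ℝ)/(k+1) := by positivity
      linarith
    have := dimH_le_of_hausdorffMeasure_ne_top
      (s := S ω) (d := (1 - β + (1:ℝ)/(k+1) : ℝ).toNNReal) (by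
        rw [Real.coe_toNNReal _ hpos, hω k]
        exact ENNReal.zero_ne_top)
    rw [ENNReal.ofReal]
    exact this
  refine ENNReal.le_of_forall_pos_le_add ?_
  intro δ hδ hlt
  obtain ⟨k, hk⟩ := exists_nat_one_div_lt (show (0:ℝ) < (δ:ℝ) by exact_mod_cast hδ)
  calc dimH (S ω) ≤ ENNReal.ofReal (1 - β + (1:ℝ)/(k+1)) := hdim k
    _ ≤ ENNReal.ofReal (1 - β) + ENNReal.ofReal ((1:ℝ)/(k+1)) := ENNReal.ofReal_add_le
    _ ≤ ENNReal.ofReal (1 - β) + δ := by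
        gcongr
        rw [← ENNReal.ofReal_coe_nnreal]
        exact ENNReal.ofReal_le_ofReal (by push_cast; linarith [hk.le])
end

section
/- Suppose b : ℝ → ℝ is continuous, b(0) = 1, b(x) = b(−x), b is non-increasing on (0,∞), lim_{x→∞} b(x) = 0, and there exist constants c₁, c₂ > 0 and 0 ≤ α < 1 with c₁|x|^α ≤ 1 − b(x) ≤ c₂|x|^α for all x near 0. Let ξ(x) = ∫_0^x (1 − b(y))^{−1} dy for x > 0 (finite by the assumption ∫_{0+}(1−b(x))^{−1}dx < ∞), and set a(ξ) = 1 − b(x(ξ)) where x(ξ) is the inverse of x ↦ ξ(x). Then a(ξ) ≍ ξ^{α/(1−α)} as ξ → 0, i.e., there exist constants C₁, C₂ > 0 with C₁ ξ^{α/(1−α)} ≤ a(ξ) ≤ C₂ ξ^{α/(1−α)} for all sufficiently small ξ > 0. -/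
open MeasureTheory Set intervalIntegral

/-- Under the standing assumptions on the correlation function `b`
(continuous, `b(0)=1`, even, non-increasing on `(0,∞)`, vanishing at infinity,
`1 - b(x) ≍ |x|^α` near `0` with `0 ≤ α < 1`, and `(1-b)⁻¹` integrable near `0`),
if `ξfun x = ∫_0^x (1-b(y))⁻¹ dy` is the canonical scale and `xinv` its local inverse,
then `a(ξ) = 1 - b(xinv ξ)` satisfies `a(ξ) ≍ ξ^{α/(1-α)}` as `ξ → 0`. -/
theorem stmt_4
    (b : ℝ → ℝ) (hbcont : Continuous b) (hb0 : b 0 = 1)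
    (hbeven : ∀ x, b x = b (-x))
    (hbmono : AntitoneOn b (Ioi 0))
    (hbinfty : Filter.Tendsto b Filter.atTop (nhds 0))
    (α : ℝ) (hα0 : 0 ≤ α) (hα1 : α < 1)
    (c₁ c₂ δ : ℝ) (hc₁ : 0 < c₁) (hc₂ : 0 < c₂) (hδ : 0 < δ)
    (hasymp : ∀ x : ℝ, 0 < |x| → |x| < δ →
      c₁ * |x| ^ α ≤ 1 - b x ∧ 1 - b x ≤ c₂ * |x| ^ α)
    (hint : IntegrableOn (fun x => (1 - b x)⁻¹) (Ioo 0 1) volume)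
    (ξfun : ℝ → ℝ) (hξfun : ∀ x : ℝ, 0 ≤ x → ξfun x = ∫ y in (0)..x, (1 - b y)⁻¹)
    (xinv : ℝ → ℝ) (hxinv : ∀ x ∈ Ioo 0 δ, xinv (ξfun x) = x)
    (hxinv' : ∀ ξ ∈ Ioo 0 (ξfun δ), ξfun (xinv ξ) = ξ ∧ xinv ξ ∈ Ioo 0 δ) :
    ∃ C₁ C₂ : ℝ, 0 < C₁ ∧ 0 < C₂ ∧ ∃ δ' > 0, ∀ ξ ∈ Ioo 0 δ',
      C₁ * ξ ^ (α / (1 - α)) ≤ 1 - b (xinv ξ) ∧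
      1 - b (xinv ξ) ≤ C₂ * ξ ^ (α / (1 - α)) := by
  have h1α : 0 < 1 - α := by linarith
  set β : ℝ := α / (1 - α) with hβdef
  have hβ0 : 0 ≤ β := div_nonneg hα0 h1α.le
  set δ₀ : ℝ := min (δ / 2) 2⁻¹ with hδ₀def
  have hδ₀pos : 0 < δ₀ := lt_min (by linarith) (by norm_num)
  have hδ₀δ : δ₀ < δ := lt_of_le_of_lt (min_le_left _ _) (by linarith)
  have hδ₀1 : δ₀ < 1 := lt_of_le_of_lt (min_le_right _ _) (by norm_num)
  -- positivity of 1 - b on (0, ∞)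
  have key : ∀ y : ℝ, 0 < y → y < δ →
      c₁ * y ^ α ≤ 1 - b y ∧ 1 - b y ≤ c₂ * y ^ α := by
    intro y hy hyδ
    have h := hasymp y (by rwa [abs_of_pos hy]) (by rwa [abs_of_pos hy])
    rwa [abs_of_pos hy] at h
  have hpos : ∀ x : ℝ, 0 < x → 0 < 1 - b x := by
    intro x hx
    have hhalf : 0 < 1 - b (δ / 2) := by
      have h := (key (δ / 2) (by linarith) (by linarith)).1
      have : 0 < c₁ * (δ / 2) ^ α :=
        mul_pos hc₁ (Real.rpow_pos_of_pos (by linarith) _)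
      linarith
    rcases lt_or_ge x (δ / 2) with h | h
    · have h1 := (key x hx (by linarith)).1
      have : 0 < c₁ * x ^ α := mul_pos hc₁ (Real.rpow_pos_of_pos hx _)
      linarith
    · have hb2 : b x ≤ b (δ / 2) :=
        hbmono (mem_Ioi.2 (by linarith)) (mem_Ioi.2 hx) h
      linarith
  -- integrability of the integrand on (0, x] for x ≤ δ₀
  have hInt : ∀ x : ℝ, x ≤ δ₀ →
      IntegrableOn (fun y => (1 - b y)⁻¹) (Ioc 0 x) volume := by
    intro x hx
    exact hint.mono_set (fun y hy => ⟨hy.1, lt_of_le_of_lt (le_trans hy.2 hx) hδ₀1⟩)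
  -- the rpow comparison integrals
  have hrpowIntg : ∀ (x : ℝ), 0 ≤ x →
      IntegrableOn (fun y => y ^ (-α)) (Ioc 0 x) volume := by
    intro x hx
    have h := intervalIntegral.intervalIntegrable_rpow'
      (show (-1 : ℝ) < -α by linarith) (a := 0) (b := x)
    rwa [intervalIntegrable_iff_integrableOn_Ioc_of_le hx] at h
  have hrpowVal : ∀ (x : ℝ), 0 ≤ x →
      ∫ y in Ioc (0:ℝ) x, y ^ (-α) = x ^ (1 - α) / (1 - α) := by
    intro x hx
    rw [← intervalIntegral.integral_of_le hx,
      integral_rpow (Or.inl (show (-1 : ℝ) < -α by linarith)),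
      Real.zero_rpow (show (-α + 1 : ℝ) ≠ 0 by linarith), sub_zero,
      show (-α + 1 : ℝ) = 1 - α by ring]
  -- two-sided bounds for ξfun on (0, δ₀]
  have hξbound : ∀ x : ℝ, 0 < x → x ≤ δ₀ →
      c₂⁻¹ * (x ^ (1 - α) / (1 - α)) ≤ ξfun x ∧
      ξfun x ≤ c₁⁻¹ * (x ^ (1 - α) / (1 - α)) := by
    intro x hx hxδ₀
    have hxδ : x < δ := lt_of_le_of_lt hxδ₀ hδ₀δ
    have hmem : ∀ y ∈ Ioc (0:ℝ) x,
        c₂⁻¹ * y ^ (-α) ≤ (1 - b y)⁻¹ ∧ (1 - b y)⁻¹ ≤ c₁⁻¹ * y ^ (-α) := by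
      intro y hy
      obtain ⟨hy0, hyx⟩ := hy
      have hyδ : y < δ := lt_of_le_of_lt hyx hxδ
      obtain ⟨h1, h2⟩ := key y hy0 hyδ
      have hyα : 0 < y ^ α := Real.rpow_pos_of_pos hy0 _
      have hb1 : 0 < 1 - b y := hpos y hy0
      constructor
      · have h3 : (1 - b y)⁻¹ ≥ (c₂ * y ^ α)⁻¹ :=
          inv_anti₀ hb1 h2
        calc c₂⁻¹ * y ^ (-α) = (c₂ * y ^ α)⁻¹ := by
              rw [Real.rpow_neg hy0.le, mul_inv]
          _ ≤ (1 - b y)⁻¹ := h3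
      · have h3 : (1 - b y)⁻¹ ≤ (c₁ * y ^ α)⁻¹ :=
          inv_anti₀ (mul_pos hc₁ hyα) h1
        calc (1 - b y)⁻¹ ≤ (c₁ * y ^ α)⁻¹ := h3
          _ = c₁⁻¹ * y ^ (-α) := by rw [Real.rpow_neg hy0.le, mul_inv]
    have hIf := hInt x hxδ₀
    have hIg1 : IntegrableOn (fun y => c₂⁻¹ * y ^ (-α)) (Ioc 0 x) volume :=
      (hrpowIntg x hx.le).const_mul _
    have hIg2 : IntegrableOn (fun y => c₁⁻¹ * y ^ (-α)) (Ioc 0 x) volume :=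
      (hrpowIntg x hx.le).const_mul _
    have hval : ∀ c : ℝ, ∫ y in Ioc (0:ℝ) x, c * y ^ (-α)
        = c * (x ^ (1 - α) / (1 - α)) := by
      intro c
      rw [MeasureTheory.integral_const_mul, hrpowVal x hx.le]
    have hξ : ξfun x = ∫ y in Ioc (0:ℝ) x, (1 - b y)⁻¹ := by
      rw [hξfun x hx.le, intervalIntegral.integral_of_le hx.le]
    constructor
    · rw [hξ, ← hval c₂⁻¹]
      exact setIntegral_mono_on hIg1 hIf measurableSet_Ioc (fun y hy => (hmem y hy).1)
    · rw [hξ, ← hval c₁⁻¹]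
      exact setIntegral_mono_on hIf hIg2 measurableSet_Ioc (fun y hy => (hmem y hy).2)
  -- monotonicity of ξfun beyond δ₀
  have hmono : ∀ x : ℝ, δ₀ ≤ x → ξfun δ₀ ≤ ξfun x := by
    intro x hx
    have hx0 : (0:ℝ) ≤ x := le_trans hδ₀pos.le hx
    have hI1 : IntervalIntegrable (fun y => (1 - b y)⁻¹) volume 0 δ₀ := by
      rw [intervalIntegrable_iff_integrableOn_Ioc_of_le hδ₀pos.le]
      exact hInt δ₀ le_rfl
    have hI2 : IntervalIntegrable (fun y => (1 - b y)⁻¹) volume δ₀ x := by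
      apply ContinuousOn.intervalIntegrable
      apply ContinuousOn.inv₀ ((continuous_const.sub hbcont).continuousOn)
      intro y hy
      rw [uIcc_of_le hx] at hy
      exact (hpos y (lt_of_lt_of_le hδ₀pos hy.1)).ne'
    have hadd := intervalIntegral.integral_add_adjacent_intervals hI1 hI2
    have hnn : 0 ≤ ∫ y in δ₀..x, (1 - b y)⁻¹ :=
      intervalIntegral.integral_nonneg hx
        (fun u hu => (inv_pos.2 (hpos u (lt_of_lt_of_le hδ₀pos hu.1))).le)
    rw [hξfun x hx0, hξfun δ₀ hδ₀pos.le, ← hadd]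
    linarith
  -- choose δ'
  set δ' : ℝ := ξfun δ₀ with hδ'def
  have hδ'pos : 0 < δ' := by
    have h := (hξbound δ₀ hδ₀pos le_rfl).1
    have : 0 < c₂⁻¹ * (δ₀ ^ (1 - α) / (1 - α)) := by
      apply mul_pos (inv_pos.2 hc₂)
      exact div_pos (Real.rpow_pos_of_pos hδ₀pos _) h1α
    linarith
  refine ⟨c₁ * ((1 - α) * c₁) ^ β, c₂ * ((1 - α) * c₂) ^ β,
    mul_pos hc₁ (Real.rpow_pos_of_pos (mul_pos h1α hc₁) _),
    mul_pos hc₂ (Real.rpow_pos_of_pos (mul_pos h1α hc₂) _),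
    δ', hδ'pos, ?_⟩
  intro ξ hξ
  obtain ⟨hξ0, hξδ'⟩ := hξ
  have hξδ : ξ ∈ Ioo 0 (ξfun δ) := ⟨hξ0, lt_of_lt_of_le hξδ' (hmono δ hδ₀δ.le)⟩
  obtain ⟨hfx, hxmem⟩ := hxinv' ξ hξδ
  set x : ℝ := xinv ξ with hxdef
  obtain ⟨hx0, hxδ⟩ := hxmem
  -- x ≤ δ₀
  have hxδ₀ : x ≤ δ₀ := by
    by_contra h
    push_neg at h
    have := hmono x h.le
    rw [hfx] at this
    linarith
  -- bounds relating ξ and x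
  obtain ⟨hlow, hup⟩ := hξbound x hx0 hxδ₀
  rw [hfx] at hlow hup
  have hA : 0 < x ^ (1 - α) := Real.rpow_pos_of_pos hx0 _
  have h1 : (1 - α) * c₁ * ξ ≤ x ^ (1 - α) := by
    have h := mul_le_mul_of_nonneg_left hup (by positivity : (0:ℝ) ≤ (1 - α) * c₁)
    calc (1 - α) * c₁ * ξ ≤ (1 - α) * c₁ * (c₁⁻¹ * (x ^ (1 - α) / (1 - α))) := h
      _ = x ^ (1 - α) := by field_simp
  have h2 : x ^ (1 - α) ≤ (1 - α) * c₂ * ξ := by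
    have h := mul_le_mul_of_nonneg_left hlow (by positivity : (0:ℝ) ≤ (1 - α) * c₂)
    calc x ^ (1 - α) = (1 - α) * c₂ * (c₂⁻¹ * (x ^ (1 - α) / (1 - α))) := by field_simp
      _ ≤ (1 - α) * c₂ * ξ := h
  -- rewrite x^α = (x^(1-α))^β
  have hxα : x ^ α = (x ^ (1 - α)) ^ β := by
    rw [← Real.rpow_mul hx0.le]
    congr 1
    rw [hβdef, mul_comm, div_mul_cancel₀ _ h1α.ne']
  obtain ⟨hb1, hb2⟩ := key x hx0 hxδ
  constructor
  · -- lower bound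
    have h3 : ((1 - α) * c₁ * ξ) ^ β ≤ (x ^ (1 - α)) ^ β :=
      Real.rpow_le_rpow (by positivity) h1 hβ0
    have h4 : ((1 - α) * c₁ * ξ) ^ β = ((1 - α) * c₁) ^ β * ξ ^ β :=
      Real.mul_rpow (by positivity) hξ0.le
    calc c₁ * ((1 - α) * c₁) ^ β * ξ ^ β
        = c₁ * (((1 - α) * c₁ * ξ) ^ β) := by rw [h4]; ring
      _ ≤ c₁ * ((x ^ (1 - α)) ^ β) := by
          exact mul_le_mul_of_nonneg_left h3 hc₁.le
      _ = c₁ * x ^ α := by rw [hxα]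
      _ ≤ 1 - b x := hb1
  · -- upper bound
    have h3 : (x ^ (1 - α)) ^ β ≤ ((1 - α) * c₂ * ξ) ^ β :=
      Real.rpow_le_rpow hA.le h2 hβ0
    have h4 : ((1 - α) * c₂ * ξ) ^ β = ((1 - α) * c₂) ^ β * ξ ^ β :=
      Real.mul_rpow (by positivity) hξ0.le
    calc 1 - b x ≤ c₂ * x ^ α := hb2
      _ = c₂ * ((x ^ (1 - α)) ^ β) := by rw [hxα]
      _ ≤ c₂ * (((1 - α) * c₂ * ξ) ^ β) := mul_le_mul_of_nonneg_left h3 hc₂.le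
      _ = c₂ * ((1 - α) * c₂) ^ β * ξ ^ β := by rw [h4]; ring
end

section
/- Let β(t) be a standard one-dimensional Brownian motion with β(0) = η > 0, let σ₀ = inf{s : β(s) = 0}, and for 0 < ε ≤ 1 and 0 ≤ α < 1 set φ(η) = P(∫_0^{σ₀} (|β(s)|^{α/(1−α)} ∧ 1) ds ≤ K). Then by Brownian scaling, P(∫_0^{σ₀} (|β(s)|^{α/(1−α)} ∧ 1) ds ≤ K ε) ≤ φ(ε^{−(1−α)/(2−α)} η). -/
open MeasureTheory Set intervalIntegral

/-- For a path `f`, the first nonnegative zero time. -/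
noncomputable def hitZero (f : ℝ → ℝ) : ℝ :=
  sInf {s : ℝ | 0 ≤ s ∧ f s = 0}

/-- The occupation functional `∫_0^{σ₀(f)} (|f(s)|^{α/(1-α)} ∧ 1) ds`. -/
noncomputable def occFun (α : ℝ) (f : ℝ → ℝ) : ℝ :=
  ∫ s in (0)..(hitZero f), min (|f s| ^ (α / (1 - α))) 1

namespace Stmt10Aux

open Filter
open scoped ENNReal NNReal Topology Pointwise

theorem hitZero_nonneg (f : ℝ → ℝ) : 0 ≤ hitZero f :=
  Real.sInf_nonneg fun _ hx => hx.1

theorem hitZero_mem {f : ℝ → ℝ} (hf : Continuous f) (h : ∃ s, 0 ≤ s ∧ f s = 0) :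
    0 ≤ hitZero f ∧ f (hitZero f) = 0 := by
  have hc : IsClosed {s : ℝ | 0 ≤ s ∧ f s = 0} := by
    have : {s : ℝ | 0 ≤ s ∧ f s = 0} = Ici 0 ∩ f ⁻¹' {0} := by
      ext s
      simp only [mem_inter_iff, mem_Ici, mem_preimage, mem_singleton_iff, mem_setOf_eq]
    rw [this]
    exact isClosed_Ici.inter (isClosed_singleton.preimage hf)
  exact hc.csInf_mem h ⟨0, fun x hx => hx.1⟩

theorem hitZero_le {f : ℝ → ℝ} {s : ℝ} (hs : 0 ≤ s) (hfs : f s = 0) : hitZero f ≤ s :=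
  csInf_le ⟨0, fun x hx => hx.1⟩ ⟨hs, hfs⟩

theorem hitZero_empty {f : ℝ → ℝ} (h : ¬ ∃ s, 0 ≤ s ∧ f s = 0) : hitZero f = 0 := by
  have : {s : ℝ | 0 ≤ s ∧ f s = 0} = ∅ := by
    ext s
    simp only [mem_setOf_eq, mem_empty_iff_false, iff_false]
    exact fun hs => h ⟨s, hs⟩
  rw [hitZero, this, Real.sInf_empty]

/-- rational hitting-by-time-`t` condition -/
def hitsBy (η' : ℝ) (t : ℚ) (g : ℝ → ℝ) : Prop :=
  ∀ k : ℕ, ∃ q : ℚ, 0 ≤ q ∧ q ≤ t ∧ |η' + g (q : ℝ)| < ((k : ℝ) + 1)⁻¹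

open Classical in
/-- measurable version of the first zero time, as an extended real -/
noncomputable def sigmaE (η' : ℝ) (g : ℝ → ℝ) : ℝ≥0∞ :=
  ⨅ t : ℚ, if hitsBy η' t g then ENNReal.ofReal (t : ℝ) else ⊤

/-- dyadic step approximations of the occupation functional -/
noncomputable def GN (η' p : ℝ) (n : ℕ) (g : ℝ → ℝ) : ℝ≥0∞ :=
  ∫⁻ s in Set.Ioo (0 : ℝ) ((sigmaE η' g).toReal),
    ENNReal.ofReal (min (|η' + g ((⌊(2 : ℝ) ^ n * s⌋ : ℝ) / 2 ^ n)| ^ p) 1)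

/-- measurable version of the occupation functional -/
noncomputable def G (η' p : ℝ) (g : ℝ → ℝ) : ℝ≥0∞ :=
  Filter.liminf (fun n => GN η' p n g) Filter.atTop

variable {η' p : ℝ} {g : ℝ → ℝ}

theorem hitsBy_iff (hf : Continuous fun s => η' + g s) (t : ℚ) :
    hitsBy η' t g ↔ ∃ s, 0 ≤ s ∧ s ≤ (t : ℝ) ∧ η' + g s = 0 := by
  set f : ℝ → ℝ := fun s => η' + g s with hfdef
  constructor
  · intro h
    by_contra hno
    push_neg at hno
    rcases le_or_gt 0 (t : ℝ) with ht | ht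
    · have hcomp : IsCompact (Icc (0 : ℝ) (t : ℝ)) := isCompact_Icc
      have hne : (Icc (0 : ℝ) (t : ℝ)).Nonempty := ⟨0, le_refl 0, ht⟩
      obtain ⟨x, hx, hxmin'⟩ := hcomp.exists_isMinOn hne (hf.abs.continuousOn)
      have hxmin : ∀ y ∈ Icc (0:ℝ) (t:ℝ), |f x| ≤ |f y| := fun y hy => hxmin' hy
      have hxpos : 0 < |f x| := by
        rcases lt_or_eq_of_le (abs_nonneg (f x)) with h' | h'
        · exact h'
        · exact absurd (abs_eq_zero.mp h'.symm) (hno x hx.1 hx.2)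
      obtain ⟨k, hk⟩ := exists_nat_gt (|f x|)⁻¹
      obtain ⟨q, hq0, hqt, hqlt⟩ := h k
      have h1 : ((k : ℝ) + 1)⁻¹ < |f x| := by
        rw [inv_lt_comm₀ (by positivity) hxpos]
        calc (|f x|)⁻¹ < k := hk
        _ < k + 1 := by linarith
      have h2 : |f x| ≤ |f (q : ℝ)| :=
        hxmin _ ⟨by exact_mod_cast hq0, by exact_mod_cast hqt⟩
      exact absurd (hqlt.trans h1) (not_lt.mpr h2)
    · obtain ⟨q, hq0, hqt, _⟩ := h 0
      have h1 : (0 : ℝ) ≤ (q : ℝ) := by exact_mod_cast hq0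
      have h2 : (q : ℝ) ≤ (t : ℝ) := by exact_mod_cast hqt
      linarith
  · rintro ⟨s, hs0, hst, hfs0⟩
    have hfs : f s = 0 := hfs0
    intro k
    have hε : (0 : ℝ) < ((k : ℝ) + 1)⁻¹ := by positivity
    obtain ⟨δ, hδ0, hδ⟩ := Metric.continuousAt_iff.mp hf.continuousAt _ hε
    rcases lt_or_eq_of_le hs0 with hs | hs
    · -- 0 < s : pick a rational in (s - min δ s, s)
      have hmin : 0 < min δ s := lt_min hδ0 hs
      obtain ⟨q, hq1, hq2⟩ := exists_rat_btwn (show s - min δ s < s by linarith)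
      refine ⟨q, ?_, ?_, ?_⟩
      · have : (0 : ℝ) ≤ (q : ℝ) := by
          have := min_le_right δ s; linarith
        exact_mod_cast this
      · have : (q : ℝ) ≤ (t : ℝ) := le_trans hq2.le hst
        exact_mod_cast this
      · have hdist : dist (q : ℝ) s < δ := by
          rw [Real.dist_eq, abs_of_nonpos (by linarith)]
          have := min_le_left δ s; linarith
        have h3 := hδ hdist
        rw [Real.dist_eq, hfs, sub_zero] at h3
        exact h3
    · -- s = 0
      rcases lt_or_eq_of_le (hs ▸ hst : (0:ℝ) ≤ (t:ℝ)) with ht | ht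
      · have hmin : 0 < min δ (t : ℝ) := lt_min hδ0 ht
        obtain ⟨q, hq1, hq2⟩ := exists_rat_btwn hmin
        refine ⟨q, ?_, ?_, ?_⟩
        · have : (0 : ℝ) ≤ (q : ℝ) := hq1.le
          exact_mod_cast this
        · have : (q : ℝ) ≤ (t : ℝ) := le_trans hq2.le (min_le_right _ _)
          exact_mod_cast this
        · have hdist : dist (q : ℝ) s < δ := by
            rw [Real.dist_eq, ← hs, sub_zero, abs_of_nonneg hq1.le]
            exact hq2.trans_le (min_le_left _ _)
          have h3 := hδ hdist
          rw [Real.dist_eq, hfs, sub_zero] at h3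
          exact h3
      · refine ⟨0, le_refl 0, ?_, ?_⟩
        · exact_mod_cast (ht ▸ le_refl (0:ℝ) : (0:ℝ) ≤ (t:ℝ))
        · have h0 : f ((0:ℚ):ℝ) = 0 := by
            rw [Rat.cast_zero]; rw [← hs] at hfs; exact hfs
          show |f ((0:ℚ):ℝ)| < _
          rw [h0, abs_zero]
          exact hε

theorem sigmaE_eq_top (hf : Continuous fun s => η' + g s)
    (h : ¬ ∃ s, 0 ≤ s ∧ η' + g s = 0) : sigmaE η' g = ⊤ := by
  rw [sigmaE]
  simp only [iInf_eq_top]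
  intro t
  rw [if_neg]
  intro hb
  obtain ⟨s, hs0, _, hfs⟩ := (hitsBy_iff hf t).mp hb
  exact h ⟨s, hs0, hfs⟩

theorem sigmaE_eq (hf : Continuous fun s => η' + g s)
    (h : ∃ s, 0 ≤ s ∧ η' + g s = 0) :
    sigmaE η' g = ENNReal.ofReal (hitZero fun s => η' + g s) := by
  set σ := hitZero fun s => η' + g s with hσ
  have hσ0 : 0 ≤ σ := hitZero_nonneg _
  have hσz : (η' + g σ) = 0 := (hitZero_mem hf h).2
  have key : ∀ t : ℚ, hitsBy η' t g ↔ σ ≤ (t : ℝ) := by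
    intro t
    rw [hitsBy_iff hf]
    constructor
    · rintro ⟨s, hs0, hst, hfs⟩
      exact (hitZero_le hs0 hfs).trans hst
    · intro hσt
      exact ⟨σ, hσ0, hσt, hσz⟩
  apply le_antisymm
  · refine ENNReal.le_of_forall_pos_le_add fun δ hδ _ => ?_
    have hδ' : (0 : ℝ) < (δ : ℝ) := by exact_mod_cast hδ
    obtain ⟨t, ht1, ht2⟩ := exists_rat_btwn (lt_add_of_pos_right σ hδ')
    refine le_trans (iInf_le _ t) ?_
    rw [if_pos ((key t).mpr ht1.le)]
    calc ENNReal.ofReal (t : ℝ) ≤ ENNReal.ofReal (σ + δ) := ENNReal.ofReal_le_ofReal ht2.le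
    _ = ENNReal.ofReal σ + ENNReal.ofReal δ := ENNReal.ofReal_add hσ0 hδ'.le
    _ = ENNReal.ofReal σ + δ := by rw [ENNReal.ofReal_coe_nnreal]
  · refine le_iInf fun t => ?_
    by_cases hb : hitsBy η' t g
    · rw [if_pos hb]; exact ENNReal.ofReal_le_ofReal ((key t).mp hb)
    · rw [if_neg hb]; exact le_top

theorem measurableSet_hitsBy (η' : ℝ) (t : ℚ) :
    MeasurableSet {g : ℝ → ℝ | hitsBy η' t g} := by
  have hset : {g : ℝ → ℝ | hitsBy η' t g} =
      ⋂ k : ℕ, ⋃ q : ℚ, ⋃ (_ : 0 ≤ q ∧ q ≤ t),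
        {g : ℝ → ℝ | |η' + g (q : ℝ)| < ((k : ℝ) + 1)⁻¹} := by
    ext g
    simp only [mem_setOf_eq, mem_iInter, mem_iUnion]
    constructor
    · intro h k; obtain ⟨q, h1, h2, h3⟩ := h k; exact ⟨q, ⟨h1, h2⟩, h3⟩
    · intro h k; obtain ⟨q, ⟨h1, h2⟩, h3⟩ := h k; exact ⟨q, h1, h2, h3⟩
  rw [hset]
  refine MeasurableSet.iInter fun k => MeasurableSet.iUnion fun q =>
    MeasurableSet.iUnion fun _ => ?_
  have hm : Measurable fun g : ℝ → ℝ => |η' + g (q : ℝ)| :=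
    (Measurable.const_add (measurable_pi_apply (q : ℝ) : Measurable fun g : ℝ → ℝ => g (q : ℝ)) η').abs
  exact hm measurableSet_Iio

theorem measurable_sigmaE (η' : ℝ) : Measurable (sigmaE η') := by
  refine Measurable.iInf fun t => ?_
  exact Measurable.ite (measurableSet_hitsBy η' t) measurable_const measurable_const

theorem measurable_GN (η' p : ℝ) (hp : 0 ≤ p) (n : ℕ) : Measurable (GN η' p n) := by
  classical
  set C : Set ((ℝ → ℝ) × ℝ) :=
    {x | 0 < x.2 ∧ x.2 < (sigmaE η' x.1).toReal} with hC
  set h : (ℝ → ℝ) × ℝ → ℝ≥0∞ :=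
    fun x => ENNReal.ofReal (min (|η' + x.1 ((⌊(2 : ℝ) ^ n * x.2⌋ : ℝ) / 2 ^ n)| ^ p) 1) with hh
  have hCm : MeasurableSet C := by
    apply MeasurableSet.inter
    · exact measurable_snd measurableSet_Ioi
    · exact measurableSet_lt measurable_snd
        (((measurable_sigmaE η').comp measurable_fst).ennreal_toReal)
  have hhm : Measurable h := by
    have e1 : Measurable fun y : (ℝ → ℝ) × ℤ => y.1 ((y.2 : ℝ) / 2 ^ n) :=
      measurable_from_prod_countable_left (fun k : ℤ => measurable_pi_apply ((k : ℝ) / 2 ^ n))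
    have e2 : Measurable fun x : (ℝ → ℝ) × ℝ => ((x.1, ⌊(2 : ℝ) ^ n * x.2⌋) : (ℝ → ℝ) × ℤ) :=
      measurable_fst.prodMk (Int.measurable_floor.comp (measurable_snd.const_mul _))
    have e3 : Measurable fun x : (ℝ → ℝ) × ℝ => x.1 ((⌊(2 : ℝ) ^ n * x.2⌋ : ℝ) / 2 ^ n) :=
      e1.comp e2
    have hphi : Continuous fun r : ℝ => min (|η' + r| ^ p) 1 :=
      ((Real.continuous_rpow_const hp).comp ((continuous_const.add continuous_id).abs)).min
        continuous_const
    exact (hphi.measurable.comp e3).ennreal_ofReal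
  have key : GN η' p n = fun g => ∫⁻ s, C.indicator h (g, s) := by
    funext g
    rw [GN, ← lintegral_indicator measurableSet_Ioo]
    congr 1
  rw [key]
  exact Measurable.lintegral_prod_right (f := fun g s => C.indicator h (g, s))
    (hhm.indicator hCm)

theorem measurable_G (η' p : ℝ) (hp : 0 ≤ p) : Measurable (G η' p) :=
  Measurable.liminf fun n => measurable_GN η' p hp n

theorem dyadic_tendsto (s : ℝ) :
    Tendsto (fun n : ℕ => ((⌊(2 : ℝ) ^ n * s⌋ : ℝ)) / 2 ^ n) atTop (𝓝 s) := by
  have h2 : ∀ n : ℕ, (0 : ℝ) < 2 ^ n := fun n => by positivity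
  refine tendsto_of_tendsto_of_tendsto_of_le_of_le
    (g := fun n : ℕ => s - ((2 : ℝ) ^ n)⁻¹) (h := fun _ : ℕ => s) ?_ tendsto_const_nhds ?_ ?_
  · have : Tendsto (fun n : ℕ => ((2 : ℝ) ^ n)⁻¹) atTop (𝓝 0) :=
      tendsto_inv_atTop_zero.comp (tendsto_pow_atTop_atTop_of_one_lt one_lt_two)
    simpa using tendsto_const_nhds.sub this
  · intro n
    have h1 : (2 : ℝ) ^ n * s < (⌊(2 : ℝ) ^ n * s⌋ : ℝ) + 1 := Int.lt_floor_add_one _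
    rw [sub_le_iff_le_add, div_add' _ _ _ (h2 n).ne', le_div_iff₀ (h2 n)]
    calc s * 2 ^ n = 2 ^ n * s := mul_comm _ _
    _ ≤ (⌊(2 : ℝ) ^ n * s⌋ : ℝ) + ((2 : ℝ) ^ n)⁻¹ * 2 ^ n := by
        rw [inv_mul_cancel₀ (h2 n).ne']; linarith
  · intro n
    rw [div_le_iff₀ (h2 n)]
    calc ((⌊(2 : ℝ) ^ n * s⌋ : ℝ)) ≤ 2 ^ n * s := Int.floor_le _
    _ = s * 2 ^ n := mul_comm _ _

theorem GN_eq (hσ : 0 ≤ hitZero (fun s => η' + g s))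
    (hsig : sigmaE η' g = ENNReal.ofReal (hitZero fun s => η' + g s)) (n : ℕ) :
    GN η' p n g = ∫⁻ s in Set.Ioo (0 : ℝ) (hitZero fun s => η' + g s),
      ENNReal.ofReal (min (|η' + g ((⌊(2 : ℝ) ^ n * s⌋ : ℝ) / 2 ^ n)| ^ p) 1) := by
  rw [GN, hsig, ENNReal.toReal_ofReal hσ]

theorem G_eq (hf : Continuous fun s => η' + g s) (hp : 0 ≤ p)
    (h : ∃ s, 0 ≤ s ∧ η' + g s = 0) :
    G η' p g = ENNReal.ofReal
      (∫ s in (0 : ℝ)..(hitZero fun s => η' + g s), min (|η' + g s| ^ p) 1) := by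
  classical
  set f : ℝ → ℝ := fun s => η' + g s with hfdef
  set σ : ℝ := hitZero f with hσdef
  have hσ0 : 0 ≤ σ := hitZero_nonneg f
  have hsig : sigmaE η' g = ENNReal.ofReal σ := sigmaE_eq hf h
  have hφc : Continuous fun r : ℝ => min (|r| ^ p) 1 :=
    ((Real.continuous_rpow_const hp).comp continuous_abs).min continuous_const
  have hφ0 : ∀ r : ℝ, 0 ≤ min (|r| ^ p) 1 := fun r =>
    le_min (Real.rpow_nonneg (abs_nonneg _) p) zero_le_one
  have hcont : Continuous fun x : ℝ => ENNReal.ofReal (min (|f x| ^ p) 1) :=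
    ENNReal.continuous_ofReal.comp (hφc.comp hf)
  have hmeasfl : ∀ n : ℕ, Measurable fun s : ℝ => ((⌊(2 : ℝ) ^ n * s⌋ : ℝ) / 2 ^ n) := by
    intro n
    have : Measurable fun s : ℝ => (⌊(2 : ℝ) ^ n * s⌋ : ℤ) :=
      Int.measurable_floor.comp (measurable_id.const_mul _)
    exact (((continuous_of_discreteTopology :
      Continuous (Int.cast : ℤ → ℝ)).measurable).comp this).div_const _
  have htend : Tendsto (fun n => GN η' p n g) atTop
      (𝓝 (∫⁻ s in Set.Ioo (0 : ℝ) σ, ENNReal.ofReal (min (|f s| ^ p) 1))) := by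
    have := tendsto_lintegral_of_dominated_convergence
      (μ := (volume : Measure ℝ).restrict (Set.Ioo (0 : ℝ) σ))
      (F := fun n s => ENNReal.ofReal (min (|f ((⌊(2 : ℝ) ^ n * s⌋ : ℝ) / 2 ^ n)| ^ p) 1))
      (f := fun s => ENNReal.ofReal (min (|f s| ^ p) 1))
      (bound := fun _ => 1)
      (fun n => (hcont.measurable).comp (hmeasfl n))
      (fun n => Filter.Eventually.of_forall fun s => by
        simp only
        exact le_trans (ENNReal.ofReal_le_one.mpr (min_le_right _ _)) le_rfl)
      (by simp [setLIntegral_one, Real.volume_Ioo])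
      (Filter.Eventually.of_forall fun s =>
        (hcont.tendsto s).comp (dyadic_tendsto s))
    convert this using 2 with n
    exact GN_eq hσ0 hsig n
  have hGlim : G η' p g = ∫⁻ s in Set.Ioo (0 : ℝ) σ, ENNReal.ofReal (min (|f s| ^ p) 1) :=
    htend.liminf_eq
  rw [hGlim]
  have hint : IntegrableOn (fun s => min (|f s| ^ p) 1) (Set.Ioo (0 : ℝ) σ) :=
    (((hφc.comp hf).continuousOn).integrableOn_compact isCompact_Icc).mono_set
      Ioo_subset_Icc_self
  rw [intervalIntegral.integral_of_le hσ0, MeasureTheory.integral_Ioc_eq_integral_Ioo,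
    MeasureTheory.ofReal_integral_eq_lintegral_ofReal hint
      (Filter.Eventually.of_forall fun s => hφ0 _)]

theorem G_eq_zero (hf : Continuous fun s => η' + g s)
    (h : ¬ ∃ s, 0 ≤ s ∧ η' + g s = 0) : G η' p g = 0 := by
  have hσ : sigmaE η' g = ⊤ := sigmaE_eq_top hf h
  have hGN : ∀ n, GN η' p n g = 0 := by
    intro n
    rw [GN, hσ]
    simp
  rw [G]
  simp only [hGN]
  exact Filter.liminf_const 0

theorem hitZero_scale {f : ℝ → ℝ} {d : ℝ} (hd : 0 < d) :
    hitZero (fun s => d * f (s / d ^ 2)) = d ^ 2 * hitZero f := by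
  have hset : {s : ℝ | 0 ≤ s ∧ d * f (s / d ^ 2) = 0}
      = (d ^ 2) • {u : ℝ | 0 ≤ u ∧ f u = 0} := by
    ext s
    simp only [mem_setOf_eq, Set.mem_smul_set, smul_eq_mul]
    constructor
    · rintro ⟨hs0, hfs⟩
      refine ⟨s / d ^ 2, ⟨div_nonneg hs0 (by positivity), ?_⟩, by field_simp⟩
      rcases mul_eq_zero.mp hfs with h' | h'
      · exact absurd h' hd.ne'
      · exact h'
    · rintro ⟨u, ⟨hu0, hfu⟩, rfl⟩
      have hcan : d ^ 2 * u / d ^ 2 = u := by field_simp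
      refine ⟨by positivity, ?_⟩
      rw [hcan, hfu, mul_zero]
  rw [hitZero, hitZero, hset, Real.sInf_smul_of_nonneg (by positivity), smul_eq_mul]

theorem occ_scale {f : ℝ → ℝ} (hf : Continuous f) {d α : ℝ} (hd : 1 ≤ d)
    (hα0 : 0 ≤ α) (hα1 : α < 1) :
    occFun α (fun s => d * f (s / d ^ 2))
      ≤ d ^ 2 * d ^ (α / (1 - α)) * occFun α f := by
  set p := α / (1 - α) with hpdef
  have hp : 0 ≤ p := div_nonneg hα0 (by linarith)
  have hd0 : (0 : ℝ) < d := lt_of_lt_of_le one_pos hd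
  have hσ0 : 0 ≤ hitZero f := hitZero_nonneg f
  have hdp1 : 1 ≤ d ^ p := Real.one_le_rpow hd hp
  have hdp0 : (0 : ℝ) ≤ d ^ p := Real.rpow_nonneg hd0.le p
  have int1 : IntervalIntegrable (fun u => min (|d * f u| ^ p) 1) volume 0 (hitZero f) :=
    (((Real.continuous_rpow_const hp).comp ((continuous_const.mul hf).abs)).min
      continuous_const).intervalIntegrable _ _
  have int2 : IntervalIntegrable (fun u => d ^ p * min (|f u| ^ p) 1) volume 0 (hitZero f) :=
    (continuous_const.mul (((Real.continuous_rpow_const hp).comp hf.abs).min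
      continuous_const)).intervalIntegrable _ _
  have hcv : occFun α (fun s => d * f (s / d ^ 2))
      = d ^ 2 * ∫ u in (0 : ℝ)..(hitZero f), min (|d * f u| ^ p) 1 := by
    rw [occFun, hitZero_scale hd0]
    have := intervalIntegral.integral_comp_div (a := 0) (b := d ^ 2 * hitZero f)
      (c := d ^ 2) (f := fun u => min (|d * f u| ^ p) 1) (by positivity)
    rw [this, smul_eq_mul]
    congr 2
    · rw [zero_div]
    · field_simp
  rw [hcv]
  calc d ^ 2 * ∫ u in (0 : ℝ)..(hitZero f), min (|d * f u| ^ p) 1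
      ≤ d ^ 2 * ∫ u in (0 : ℝ)..(hitZero f), d ^ p * min (|f u| ^ p) 1 := by
        apply mul_le_mul_of_nonneg_left _ (by positivity)
        apply intervalIntegral.integral_mono_on hσ0 int1 int2
        intro u _
        have h1 : |d * f u| ^ p = d ^ p * |f u| ^ p := by
          rw [abs_mul, abs_of_pos hd0, Real.mul_rpow hd0.le (abs_nonneg _)]
        rw [h1, mul_min_of_nonneg _ _ hdp0]
        exact min_le_min (le_refl _) (by linarith)
    _ = d ^ 2 * (d ^ p * ∫ u in (0 : ℝ)..(hitZero f), min (|f u| ^ p) 1) := by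
        rw [intervalIntegral.integral_const_mul]
    _ = d ^ 2 * d ^ p * occFun α f := by rw [occFun]; ring

end Stmt10Aux

open Stmt10Aux

/-- Brownian scaling estimate: if `B` is a process from `0` whose law is invariant
under the Brownian scaling `B(·) ↦ c B(·/c²)` for every `c > 0`, `η > 0`,
`0 < ε ≤ 1` and `0 ≤ α < 1`, then, with `σ₀` the first zero of `η + B` and
`φ(η') = P(∫_0^{σ₀} (|η' + B(s)|^{α/(1-α)} ∧ 1) ds ≤ K)`,
`P(∫_0^{σ₀} (|η + B(s)|^{α/(1-α)} ∧ 1) ds ≤ K ε) ≤ φ(ε^{-(1-α)/(2-α)} η)`. -/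
theorem stmt_10
    {Ω : Type*} [MeasurableSpace Ω] (P : Measure Ω) [IsProbabilityMeasure P]
    (B : ℝ → Ω → ℝ)
    (hBcont : ∀ ω, Continuous (fun s => B s ω))
    (hB0 : ∀ ω, B 0 ω = 0)
    (hscaling : ∀ c : ℝ, 0 < c → ∀ A : Set (ℝ → ℝ), MeasurableSet A →
      P {ω | (fun s => c * B (s / c ^ 2) ω) ∈ A} = P {ω | (fun s => B s ω) ∈ A})
    (α : ℝ) (hα0 : 0 ≤ α) (hα1 : α < 1)
    (K : ℝ) (hK : 0 < K)
    (η : ℝ) (hη : 0 < η)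
    (ε : ℝ) (hε0 : 0 < ε) (hε1 : ε ≤ 1) :
    P {ω | occFun α (fun s => η + B s ω) ≤ K * ε}
      ≤ P {ω | occFun α (fun s => ε ^ (-(1 - α) / (2 - α)) * η + B s ω) ≤ K} := by
  classical
  have h1α : (0:ℝ) < 1 - α := by linarith
  have h2α : (0:ℝ) < 2 - α := by linarith
  set p : ℝ := α / (1 - α) with hpdef
  have hp : 0 ≤ p := div_nonneg hα0 h1α.le
  set d : ℝ := ε ^ (-(1 - α) / (2 - α)) with hddef
  have hd0 : 0 < d := Real.rpow_pos_of_pos hε0 _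
  have hd1 : 1 ≤ d := Real.one_le_rpow_of_pos_of_le_one_of_nonpos hε0 hε1
      (div_nonpos_of_nonpos_of_nonneg (by linarith) h2α.le)
  set η' : ℝ := d * η with hη'def
  -- exponent identity
  have e2 : d ^ 2 = ε ^ ((-(1 - α) / (2 - α)) * 2) := by
    rw [hddef, ← Real.rpow_natCast (ε ^ (-(1 - α) / (2 - α))) 2, ← Real.rpow_mul hε0.le]
    norm_num
  have ep : d ^ p = ε ^ ((-(1 - α) / (2 - α)) * p) := by
    rw [hddef, ← Real.rpow_mul hε0.le]
  have hsum : (-(1 - α) / (2 - α)) * 2 + (-(1 - α) / (2 - α)) * p = -1 := by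
    rw [hpdef]
    field_simp
    ring
  have hdd : d ^ 2 * d ^ p = ε⁻¹ := by
    rw [e2, ep, ← Real.rpow_add hε0, hsum, Real.rpow_neg_one]
  have hddKε : d ^ 2 * d ^ p * (K * ε) = K := by
    rw [hdd, mul_comm K ε, ← mul_assoc, inv_mul_cancel₀ hε0.ne', one_mul]
  have hdd0 : 0 ≤ d ^ 2 * d ^ p := by positivity
  -- the measurable event in path space
  set A : Set (ℝ → ℝ) := {g | G η' p g ≤ ENNReal.ofReal K} with hA
  have hAm : MeasurableSet A := measurable_G η' p hp measurableSet_Iic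
  have step1 : {ω | occFun α (fun s => η + B s ω) ≤ K * ε}
      ⊆ {ω | (fun s => d * B (s / d ^ 2) ω) ∈ A} := by
    intro ω hω
    simp only [mem_setOf_eq] at hω
    show (fun s => d * B (s / d ^ 2) ω) ∈ A
    set g0 : ℝ → ℝ := fun s => d * B (s / d ^ 2) ω with hg0
    have hfg : (fun s => η' + g0 s) = fun s => d * ((fun u => η + B u ω) (s / d ^ 2)) := by
      funext s
      simp only [hg0, hη'def]
      ring
    have hBc : Continuous fun s : ℝ => B (s / d ^ 2) ω :=
      (hBcont ω).comp (continuous_id.div_const _)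
    have hfc : Continuous fun s => η' + g0 s := by
      rw [hfg]
      exact continuous_const.mul (continuous_const.add hBc)
    show G η' p g0 ≤ ENNReal.ofReal K
    by_cases hhit : ∃ s, 0 ≤ s ∧ η' + g0 s = 0
    · rw [G_eq hfc hp hhit]
      apply ENNReal.ofReal_le_ofReal
      have hocc : (∫ s in (0 : ℝ)..(hitZero fun s => η' + g0 s), min (|η' + g0 s| ^ p) 1)
          = occFun α (fun s => η' + g0 s) := rfl
      rw [hocc]
      calc occFun α (fun s => η' + g0 s)
          = occFun α (fun s => d * ((fun u => η + B u ω) (s / d ^ 2))) := by rw [hfg]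
        _ ≤ d ^ 2 * d ^ p * occFun α (fun u => η + B u ω) :=
            occ_scale (continuous_const.add (hBcont ω)) hd1 hα0 hα1
        _ ≤ d ^ 2 * d ^ p * (K * ε) := mul_le_mul_of_nonneg_left hω hdd0
        _ = K := hddKε
    · rw [G_eq_zero hfc hhit]
      exact bot_le
  have step2 : {ω | (fun s => B s ω) ∈ A}
      ⊆ {ω | occFun α (fun s => η' + B s ω) ≤ K} := by
    intro ω hω
    simp only [mem_setOf_eq] at hω ⊢
    have hfc : Continuous fun s : ℝ => η' + (fun u => B u ω) s :=
      continuous_const.add (hBcont ω)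
    by_cases hhit : ∃ s, 0 ≤ s ∧ η' + (fun u => B u ω) s = 0
    · have hω' : G η' p (fun u => B u ω) ≤ ENNReal.ofReal K := hω
      rw [G_eq hfc hp hhit] at hω'
      exact (ENNReal.ofReal_le_ofReal_iff hK.le).mp hω'
    · have hz : hitZero (fun s => η' + (fun u => B u ω) s) = 0 := hitZero_empty hhit
      show occFun α (fun s => η' + B s ω) ≤ K
      rw [occFun]
      have hz' : hitZero (fun s => η' + B s ω) = 0 := hz
      rw [hz', intervalIntegral.integral_same]
      exact hK.le
  calc P {ω | occFun α (fun s => η + B s ω) ≤ K * ε}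
      ≤ P {ω | (fun s => d * B (s / d ^ 2) ω) ∈ A} := measure_mono step1
    _ = P {ω | (fun s => B s ω) ∈ A} := hscaling d hd0 A hAm
    _ ≤ P {ω | occFun α (fun s => η' + B s ω) ≤ K} := measure_mono step2
end
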